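/- Let c₀ denote the real Banach space of real sequences converging to 0 with the supremum norm, and let x = (x_k) ∈ B_{c₀}. For each integer n ≥ 3 define f_n : [−1,1] → ℝ by f_n(t) = 1 + |t| if 0 ≤ |t| ≤ 1 − 2/n and f_n(t) = (n−1)(1 − |t|) if 1 − 2/n ≤ |t| ≤ 1. Then for every n ≥ 3 and every choice of n distinct indices i_1, …, i_n ∈ ℕ, one has Δc(x) ≥ min{ f_n(x_{i_1}), …, f_n(x_{i_n}) }. -/
import Mathlib


open Set Metric Filter

variable {X : Type*} [NormedAddCommGroup X] [NormedSpace ℝ X]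

/-- The slice `S(f, δ)` of the closed unit ball of `X`, determined by a norm-one functional
`f` and `δ > 0` (the norm and positivity conditions are imposed at use sites). -/
def unitBallSlice (f : X →L[ℝ] ℝ) (δ : ℝ) : Set X :=
  {y | ‖y‖ ≤ 1 ∧ 1 - δ < f y}

/-- The Daugavet constant of a point: the infimum over all slices of the unit ball of the
supremum of distances from `x` to points of the slice. -/
noncomputable def Dc (x : X) : ℝ :=
  sInf {r | ∃ (f : X →L[ℝ] ℝ) (δ : ℝ), ‖f‖ = 1 ∧ 0 < δ ∧
    r = sSup ((fun y => ‖x - y‖) '' unitBallSlice f δ)}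

/-- The Δ-constant of a point: the infimum over all slices of the unit ball containing `x`
of the supremum of distances from `x` to points of the slice. -/
noncomputable def DeltaC (x : X) : ℝ :=
  sInf {r | ∃ (f : X →L[ℝ] ℝ) (δ : ℝ), ‖f‖ = 1 ∧ 0 < δ ∧ x ∈ unitBallSlice f δ ∧
    r = sSup ((fun y => ‖x - y‖) '' unitBallSlice f δ)}

/-- Piecewise bound function `f_n` from the `c₀` lower estimate for the Δ-constant. -/
noncomputable def c0BoundFun (n : ℕ) (t : ℝ) : ℝ :=
  if |t| ≤ 1 - 2 / (n : ℝ) then 1 + |t| else ((n : ℝ) - 1) * (1 - |t|)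

namespace DeltaAux
open ZeroAtInfty Finset Filter

/-- The `m`-th coordinate vector in `c₀`. -/
noncomputable def ee (m : ℕ) : C₀(ℕ, ℝ) :=
  { toFun := fun k => if k = m then (1:ℝ) else 0
    continuous_toFun := continuous_of_discreteTopology
    zero_at_infty' := by
      apply Filter.Tendsto.congr' _ tendsto_const_nhds
      filter_upwards [Filter.mem_cocompact.mpr ⟨{m}, isCompact_singleton, subset_rfl⟩] with k hk
      simp at hk; simp [hk] }

lemma ee_apply (m k : ℕ) : ee m k = if k = m then 1 else 0 := rfl

lemma apply_le_norm (z : C₀(ℕ, ℝ)) (k : ℕ) : |z k| ≤ ‖z‖ := by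
  rw [← ZeroAtInftyContinuousMap.norm_toBCF_eq_norm]
  exact (z.toBCF).norm_coe_le_norm k

lemma norm_le_of (z : C₀(ℕ, ℝ)) {C : ℝ} (h0 : 0 ≤ C) (h : ∀ k, |z k| ≤ C) : ‖z‖ ≤ C := by
  rw [← ZeroAtInftyContinuousMap.norm_toBCF_eq_norm]
  exact (BoundedContinuousFunction.norm_le h0).2 h

lemma sum_apply' (F : Finset ℕ) (g : ℕ → C₀(ℕ, ℝ)) (k : ℕ) :
    (∑ m ∈ F, g m) k = ∑ m ∈ F, (g m) k :=
  map_sum (AddMonoidHom.mk' (fun z : C₀(ℕ,ℝ) => z k) (fun _ _ => rfl)) g F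

/-- Perturbation of `g` setting coordinates in `F` to the values `c`. -/
noncomputable def pert (g : C₀(ℕ,ℝ)) (F : Finset ℕ) (c : ℕ → ℝ) : C₀(ℕ,ℝ) :=
  g + ∑ m ∈ F, (c m - g m) • ee m

lemma pert_apply (g : C₀(ℕ,ℝ)) (F : Finset ℕ) (c : ℕ → ℝ) (k : ℕ) :
    pert g F c k = if k ∈ F then c k else g k := by
  classical
  simp only [pert, ZeroAtInftyContinuousMap.coe_add, Pi.add_apply, sum_apply',
    ZeroAtInftyContinuousMap.coe_smul, Pi.smul_apply, ee_apply, smul_eq_mul, mul_ite, mul_one,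
    mul_zero]
  rw [Finset.sum_ite_eq F k (fun m => c m - g m)]
  by_cases h : k ∈ F <;> simp [h]

lemma pert_norm_le (g : C₀(ℕ,ℝ)) (F : Finset ℕ) (c : ℕ → ℝ) (hg : ‖g‖ ≤ 1)
    (hc : ∀ m ∈ F, |c m| ≤ 1) : ‖pert g F c‖ ≤ 1 := by
  refine norm_le_of _ zero_le_one fun k => ?_
  rw [pert_apply]
  split
  · exact hc _ ‹_›
  · exact (apply_le_norm g k).trans hg

lemma pert_f (f : C₀(ℕ,ℝ) →L[ℝ] ℝ) (g : C₀(ℕ,ℝ)) (F : Finset ℕ) (c : ℕ → ℝ) :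
    f (pert g F c) = f g + ∑ m ∈ F, (c m - g m) * f (ee m) := by
  simp [pert, map_add, map_sum, map_smul, smul_eq_mul]

lemma sign_mul (f : C₀(ℕ,ℝ) →L[ℝ] ℝ) (m : ℕ) :
    (if f (ee m) < 0 then (-1:ℝ) else 1) * f (ee m) = |f (ee m)| := by
  by_cases h : f (ee m) < 0
  · simp [h, abs_of_neg h]
  · simp [h, abs_of_nonneg (not_lt.1 h)]

lemma sum_abs_le (f : C₀(ℕ,ℝ) →L[ℝ] ℝ) (F : Finset ℕ) :
    ∑ m ∈ F, |f (ee m)| ≤ ‖f‖ := by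
  classical
  set c : ℕ → ℝ := fun m => if f (ee m) < 0 then (-1:ℝ) else 1 with hcdef
  have hc1 : ∀ m ∈ F, |c m| ≤ 1 := by
    intro m _; by_cases h : f (ee m) < 0 <;> simp [hcdef, h]
  have h2 : f (pert 0 F c) = ∑ m ∈ F, |f (ee m)| := by
    rw [pert_f, map_zero, zero_add]
    refine Finset.sum_congr rfl fun m _ => ?_
    simp only [ZeroAtInftyContinuousMap.coe_zero, Pi.zero_apply, sub_zero]
    exact sign_mul f m
  have h3 : ‖pert 0 F c‖ ≤ 1 := pert_norm_le _ _ _ (by simp) hc1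
  calc ∑ m ∈ F, |f (ee m)| = f (pert 0 F c) := h2.symm
    _ ≤ |f (pert 0 F c)| := le_abs_self _
    _ ≤ ‖f‖ * ‖pert 0 F c‖ := f.le_opNorm _
    _ ≤ ‖f‖ * 1 := by
        exact mul_le_mul_of_nonneg_left h3 (norm_nonneg f)
    _ = ‖f‖ := mul_one _

lemma budget (f : C₀(ℕ,ℝ) →L[ℝ] ℝ) (x : C₀(ℕ,ℝ)) (hx : ‖x‖ ≤ 1) (F : Finset ℕ) :
    ∑ m ∈ F, |f (ee m)| * (1 - |x m|) ≤ ‖f‖ - f x := by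
  classical
  set c : ℕ → ℝ := fun m => if f (ee m) < 0 then (-1:ℝ) else 1 with hcdef
  have hc1 : ∀ m ∈ F, |c m| ≤ 1 := by
    intro m _; by_cases h : f (ee m) < 0 <;> simp [hcdef, h]
  have key : f (pert x F c) ≤ ‖f‖ := by
    calc f (pert x F c) ≤ |f (pert x F c)| := le_abs_self _
      _ ≤ ‖f‖ * ‖pert x F c‖ := f.le_opNorm _
      _ ≤ ‖f‖ * 1 := mul_le_mul_of_nonneg_left (pert_norm_le _ _ _ hx hc1) (norm_nonneg f)
      _ = ‖f‖ := mul_one _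
  rw [pert_f] at key
  have tw : ∀ m ∈ F, |f (ee m)| * (1 - |x m|) ≤ (c m - x m) * f (ee m) := by
    intro m _
    have h1 : x m * f (ee m) ≤ |x m| * |f (ee m)| := by
      calc x m * f (ee m) ≤ |x m * f (ee m)| := le_abs_self _
        _ = |x m| * |f (ee m)| := abs_mul _ _
    have h2 : (c m - x m) * f (ee m) = |f (ee m)| - x m * f (ee m) := by
      rw [sub_mul, sign_mul f m]
    nlinarith [abs_nonneg (f (ee m))]
  have := Finset.sum_le_sum tw
  linarith

lemma exists_small_coord (f : C₀(ℕ,ℝ) →L[ℝ] ℝ) (hf : ‖f‖ ≤ 1) {ε : ℝ} (hε : 0 < ε) :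
    ∃ m : ℕ, |f (ee m)| < ε := by
  by_contra h
  push_neg at h
  obtain ⟨N, hN⟩ := exists_nat_gt (1/ε)
  have h1 : (N:ℝ) * ε ≤ 1 := by
    calc (N:ℝ) * ε = ∑ _m ∈ Finset.range N, ε := by simp [mul_comm]
      _ ≤ ∑ m ∈ Finset.range N, |f (ee m)| := Finset.sum_le_sum fun m _ => h m
      _ ≤ ‖f‖ := sum_abs_le f _
      _ ≤ 1 := hf
  rw [div_lt_iff₀ hε] at hN
  linarith

lemma exists_norming (f : C₀(ℕ,ℝ) →L[ℝ] ℝ) (hf : ‖f‖ = 1) {η : ℝ} (hη : 0 < η) :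
    ∃ u : C₀(ℕ,ℝ), ‖u‖ ≤ 1 ∧ 1 - η < f u := by
  have h : max 0 (1 - η) < ‖f‖ := by
    rw [hf]; exact max_lt one_pos (by linarith)
  obtain ⟨u, hu1, hu2⟩ := f.exists_lt_apply_of_lt_opNorm h
  rw [Real.norm_eq_abs] at hu2
  have hmax := le_max_right (0:ℝ) (1 - η)
  by_cases hs : f u < 0
  · refine ⟨-u, by rw [norm_neg]; exact hu1.le, ?_⟩
    rw [map_neg]
    rw [abs_of_neg hs] at hu2
    linarith [lt_of_le_of_lt hmax hu2]
  · refine ⟨u, hu1.le, ?_⟩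
    rw [abs_of_nonneg (not_lt.1 hs)] at hu2
    linarith [lt_of_le_of_lt hmax hu2]

/-- Main construction: a point of the slice with prescribed value `c` at coordinate `m`. -/
lemma constr (f : C₀(ℕ,ℝ) →L[ℝ] ℝ) (hf : ‖f‖ = 1) {δ : ℝ} (hδ : 0 < δ) (m : ℕ) (c : ℝ)
    (hc : |c| ≤ 1) (h : |f (ee m)| * (1 + |c|) < δ) :
    ∃ y : C₀(ℕ,ℝ), ‖y‖ ≤ 1 ∧ 1 - δ < f y ∧ y m = c := by
  classical
  set a := |f (ee m)| with hadef
  set η := (δ - a * (1 + |c|)) / 2 with hηdef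
  have hη0 : 0 < η := by rw [hηdef]; linarith
  obtain ⟨u, hu1, hu2⟩ := exists_norming f hf hη0
  refine ⟨pert u {m} (fun _ => c), pert_norm_le _ _ _ hu1 (fun k _ => hc), ?_,
    by rw [pert_apply]; simp⟩
  rw [pert_f, Finset.sum_singleton]
  have hum : |u m| ≤ 1 := (apply_le_norm u m).trans hu1
  have h1 : |(c - u m) * f (ee m)| ≤ (1 + |c|) * a := by
    rw [abs_mul, ← hadef]
    have : |c - u m| ≤ 1 + |c| := by
      calc |c - u m| ≤ |c| + |u m| := abs_sub _ _
        _ ≤ 1 + |c| := by linarith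
    exact mul_le_mul_of_nonneg_right this (abs_nonneg _)
  have h2 := neg_abs_le ((c - u m) * f (ee m))
  have ha0 : 0 ≤ a := abs_nonneg _
  nlinarith

end DeltaAux
namespace DeltaAux
open ZeroAtInfty Finset Filter

lemma main_slice (x : C₀(ℕ,ℝ)) (hx : ‖x‖ ≤ 1) (n : ℕ) (hn : 3 ≤ n) (i : Fin n → ℕ)
    (hi : Function.Injective i) (f : C₀(ℕ,ℝ) →L[ℝ] ℝ) (hf : ‖f‖ = 1) (δ : ℝ) (hδ : 0 < δ)
    (hxf : 1 - δ < f x) :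
    ∃ y : C₀(ℕ,ℝ), ‖y‖ ≤ 1 ∧ 1 - δ < f y ∧
      (⨅ k : Fin n, c0BoundFun n (x (i k))) ≤ ‖x - y‖ := by
  classical
  have hn3 : (3:ℝ) ≤ n := by exact_mod_cast hn
  have hn0 : (0:ℝ) < n := by linarith
  set F : Finset ℕ := Finset.image i Finset.univ with hFdef
  have hcard : F.card = n := by
    rw [hFdef, Finset.card_image_of_injective _ hi, Finset.card_univ, Fintype.card_fin]
  have hbudget : ∑ m ∈ F, |f (ee m)| * (1 - |x m|) < δ := by
    have := budget f x hx F
    rw [hf] at this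
    linarith
  have hpig : ∃ j ∈ F, |f (ee j)| * (1 - |x j|) < δ / n := by
    by_contra h
    push_neg at h
    have h1 : F.card • (δ/(n:ℝ)) ≤ ∑ m ∈ F, |f (ee m)| * (1 - |x m|) :=
      Finset.card_nsmul_le_sum F _ _ h
    rw [hcard, nsmul_eq_mul] at h1
    have heq : (n:ℝ) * (δ / n) = δ := by field_simp
    rw [heq] at h1
    linarith
  obtain ⟨j, hjF, hj⟩ := hpig
  obtain ⟨k₀, -, hk₀⟩ := Finset.mem_image.1 hjF
  set t := |x j| with ht
  have ht1 : t ≤ 1 := (apply_le_norm x j).trans hx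
  have ht0 : 0 ≤ t := abs_nonneg _
  have hinf : (⨅ k : Fin n, c0BoundFun n (x (i k))) ≤ c0BoundFun n (x j) := by
    rw [← hk₀]
    exact ciInf_le (Set.Finite.bddBelow (Set.finite_range _)) k₀
  set a := |f (ee j)| with ha
  have ha0 : 0 ≤ a := abs_nonneg _
  have hkey : (n:ℝ) * (a * (1 - t)) < δ := by
    rw [lt_div_iff₀ hn0] at hj
    nlinarith
  by_cases hcase : (n:ℝ) * (1 - t) ≤ 1
  · -- far-coordinate construction; here the target is at most 1
    have h1t : 1 - t ≤ 1/(n:ℝ) := by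
      rw [le_div_iff₀ hn0]; nlinarith
    have htb : 1 - 2/(n:ℝ) < |x j| := by
      rw [← ht]
      have h12 : 1/(n:ℝ) < 2/(n:ℝ) := by
        have hpos : 0 < 1/(n:ℝ) := by positivity
        have heq : 2/(n:ℝ) - 1/(n:ℝ) = 1/(n:ℝ) := by ring
        linarith
      linarith
    have hT : c0BoundFun n (x j) ≤ 1 := by
      rw [c0BoundFun, if_neg (not_le.2 htb)]
      have hn1 : (0:ℝ) ≤ (n:ℝ) - 1 := by linarith
      nlinarith
    obtain ⟨m, hm⟩ := exists_small_coord f hf.le (half_pos hδ)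
    set c : ℝ := if x m < 0 then 1 else -1 with hcdef
    have hc1 : |c| = 1 := by by_cases h : x m < 0 <;> simp [hcdef, h]
    have hcond : |f (ee m)| * (1 + |c|) < δ := by
      rw [hc1]
      have : (0:ℝ) ≤ |f (ee m)| := abs_nonneg _
      linarith
    obtain ⟨y, hy1, hy2, hy3⟩ := constr f hf hδ m c hc1.le hcond
    refine ⟨y, hy1, hy2, ?_⟩
    have hdist : (1:ℝ) ≤ |x m - c| := by
      by_cases h : x m < 0
      · rw [hcdef, if_pos h, abs_of_nonpos (by linarith)]
        linarith
      · push_neg at h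
        rw [hcdef, if_neg (not_lt.2 h), abs_of_nonneg (by linarith)]
        linarith
    calc (⨅ k : Fin n, c0BoundFun n (x (i k))) ≤ c0BoundFun n (x j) := hinf
      _ ≤ 1 := hT
      _ ≤ |x m - c| := hdist
      _ = |(x - y) m| := by
          rw [ZeroAtInftyContinuousMap.coe_sub, Pi.sub_apply, hy3]
      _ ≤ ‖x - y‖ := apply_le_norm _ _
  · -- main construction at coordinate j
    push_neg at hcase
    set r : ℝ := min 1 ((n:ℝ) * (1 - t) - 1) with hrdef
    have hr0 : 0 < r := lt_min one_pos (by linarith)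
    have hr1 : r ≤ 1 := min_le_left _ _
    set s : ℝ := if x j < 0 then -1 else 1 with hsdef
    have hs1 : |s| = 1 := by by_cases h : x j < 0 <;> simp [hsdef, h]
    have hsx : s * x j = t := by
      by_cases h : x j < 0
      · rw [hsdef, if_pos h, ht, abs_of_neg h]; ring
      · push_neg at h
        rw [hsdef, if_neg (not_lt.2 h), ht, abs_of_nonneg h]; ring
    set c : ℝ := -(s * r) with hcdef
    have hcabs : |c| = r := by
      rw [hcdef, abs_neg, abs_mul, hs1, one_mul, abs_of_pos hr0]
    have h1r : 1 + r ≤ (n:ℝ) * (1 - t) := by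
      have := min_le_right 1 ((n:ℝ)*(1-t)-1)
      linarith [hr1, this, min_le_right (1:ℝ) ((n:ℝ)*(1-t)-1)]
    have hcond : a * (1 + |c|) < δ := by
      rw [hcabs]
      nlinarith
    obtain ⟨y, hy1, hy2, hy3⟩ := constr f hf hδ j c (hcabs.le.trans hr1) hcond
    refine ⟨y, hy1, hy2, ?_⟩
    have hxj : x j = s * t := by
      have hss : s * s = 1 := by by_cases h : x j < 0 <;> simp [hsdef, h]
      calc x j = (s * s) * x j := by rw [hss]; ring
        _ = s * t := by rw [mul_assoc, hsx]
    have hd : |x j - c| = t + r := by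
      have : x j - c = s * (t + r) := by rw [hxj, hcdef]; ring
      rw [this, abs_mul, hs1, one_mul, abs_of_nonneg (by linarith)]
    have hTle : c0BoundFun n (x j) ≤ t + r := by
      rw [c0BoundFun]
      by_cases hb : |x j| ≤ 1 - 2/(n:ℝ)
      · rw [if_pos hb, ← ht]
        have h2n : 2/(n:ℝ) ≤ 1 - t := by rw [ht]; linarith
        have h2 : 2 ≤ (n:ℝ) * (1 - t) := by
          rw [div_le_iff₀ hn0] at h2n; linarith
        have : r = 1 := min_eq_left (by linarith)
        linarith
      · rw [if_neg hb, ← ht]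
        push_neg at hb
        rw [← ht] at hb
        have h2n : 1 - t < 2/(n:ℝ) := by linarith
        have h2 : (n:ℝ) * (1 - t) < 2 := by
          rw [lt_div_iff₀ hn0] at h2n; linarith
        have hrr : r = (n:ℝ) * (1 - t) - 1 := min_eq_right (by linarith)
        have hid : ((n:ℝ) - 1) * (1 - t) = t + ((n:ℝ) * (1 - t) - 1) := by ring
        rw [hid, hrr]
    calc (⨅ k : Fin n, c0BoundFun n (x (i k))) ≤ c0BoundFun n (x j) := hinf
      _ ≤ t + r := hTle
      _ = |x j - c| := hd.symm
      _ = |(x - y) j| := by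
          rw [ZeroAtInftyContinuousMap.coe_sub, Pi.sub_apply, hy3]
      _ ≤ ‖x - y‖ := apply_le_norm _ _

noncomputable def ev0 : C₀(ℕ,ℝ) →L[ℝ] ℝ :=
  LinearMap.mkContinuous
    { toFun := fun z => z 0
      map_add' := by intros; simp
      map_smul' := by intros; simp } 1
    (fun z => by
      simp only [LinearMap.coe_mk, AddHom.coe_mk, one_mul, Real.norm_eq_abs]
      exact apply_le_norm z 0)

lemma ev0_apply (z : C₀(ℕ,ℝ)) : ev0 z = z 0 := rfl

lemma ev0_norm : ‖ev0‖ = 1 := by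
  refine le_antisymm (LinearMap.mkContinuous_norm_le _ one_pos.le _) ?_
  have h1 : ev0 (ee 0) = 1 := by rw [ev0_apply, ee_apply]; simp
  have h2 : ‖ee 0‖ ≤ 1 := norm_le_of _ zero_le_one (fun k => by
    rw [ee_apply]; split <;> simp)
  have h3 := ev0.le_opNorm (ee 0)
  rw [h1, norm_one] at h3
  nlinarith [norm_nonneg ev0]

end DeltaAux

/-- Lower bound for the Δ-constant of a point of `B_{c₀}`: for every `n ≥ 3` and every choice
of `n` distinct indices `i 0, …, i (n-1)`, `Δc(x) ≥ min_k f_n(x_{i k})`. -/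
theorem deltaConstant_c0_lower_bound (x : ZeroAtInftyContinuousMap ℕ ℝ) (hx : ‖x‖ ≤ 1)
    (n : ℕ) (hn : 3 ≤ n) (i : Fin n → ℕ) (hi : Function.Injective i) :
    (⨅ k : Fin n, c0BoundFun n (x (i k))) ≤ DeltaC x := by
  apply le_csInf
  · refine ⟨_, DeltaAux.ev0, 3, DeltaAux.ev0_norm, by norm_num, ⟨hx, ?_⟩, rfl⟩
    have := DeltaAux.apply_le_norm x 0
    rw [DeltaAux.ev0_apply]
    have := abs_le.1 (this.trans hx)
    linarith [this.1]
  · rintro r ⟨f, δ, hf, hδ, ⟨hx1, hx2⟩, rfl⟩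
    obtain ⟨y, hy1, hy2, hy3⟩ := DeltaAux.main_slice x hx n hn i hi f hf δ hδ hx2
    refine hy3.trans (le_csSup ?_ ⟨y, ⟨hy1, hy2⟩, rfl⟩)
    refine ⟨2, ?_⟩
    rintro d ⟨z, ⟨hz1, -⟩, rfl⟩
    calc ‖x - z‖ ≤ ‖x‖ + ‖z‖ := norm_sub_le _ _
      _ ≤ 2 := by linarith
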